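/- A connected reflexive locatable digraph D of order n with no directed 2-cycles satisfies γ_OL(D) = n if and only if the digraph obtained from D by removing all loops is the transitive closure of a rooted directed tree. -/

import Mathlib

open scoped symmDiff

/-- The open in-neighbourhood of `v` in the digraph `D` (loops allowed). -/
def Nin {V : Type*} (D : V → V → Prop) (v : V) : Set V := {u | D u v}

/-- A digraph is locatable if every vertex has positive in-degree and
open in-neighbourhoods are pairwise distinct. -/
def Locatable {V : Type*} (D : V → V → Prop) : Prop :=
  (∀ v, (Nin D v).Nonempty) ∧ ∀ x y, Nin D x = Nin D y → x = y

/-- `S` is an open neighbourhood locating-dominating set of `D`. -/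
def IsOLD {V : Type*} (D : V → V → Prop) (S : Set V) : Prop :=
  (∀ v, ∃ u ∈ S, D u v) ∧ ∀ x y, x ≠ y → ∃ s ∈ S, s ∈ Nin D x ∆ Nin D y

/-- The OLD number `γ_OL(D)`: minimum size of an OLD set. -/
noncomputable def oldNum {V : Type*} (D : V → V → Prop) : ℕ :=
  sInf {k | ∃ S : Set V, IsOLD D S ∧ S.ncard = k}

/-- `v` is domination-forced: it is the unique in-neighbour of some vertex. -/
def DomForced {V : Type*} (D : V → V → Prop) (v : V) : Prop := ∃ w, Nin D w = {v}

/-- `v` is location-forced: some pair of distinct vertices has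
in-neighbourhood symmetric difference `{v}`. -/
def LocForced {V : Type*} (D : V → V → Prop) (v : V) : Prop :=
  ∃ x y, x ≠ y ∧ Nin D x ∆ Nin D y = {v}

/-- The arc `xy` is a forcing arc. -/
def ForcingArc {V : Type*} (D : V → V → Prop) (x y : V) : Prop :=
  Nin D y = {x} ∨ ∃ z, Nin D y ∆ Nin D z = {x} ∧ x ∈ Nin D y

/-- The underlying simple undirected graph of a digraph. -/
def underlying {V : Type*} (D : V → V → Prop) : SimpleGraph V where
  Adj x y := x ≠ y ∧ (D x y ∨ D y x)
  symm := ⟨by intro x y h; exact ⟨h.1.symm, h.2.symm⟩⟩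
  loopless := ⟨by intro x h; exact h.1 rfl⟩

/-- `T` is a rooted directed tree: loop-free, no 2-cycles, underlying graph a
tree, with a single root having no in-arc and every other vertex exactly one
in-arc (so all arcs are oriented away from the root). -/
def IsRootedDirTree {V : Type*} (T : V → V → Prop) : Prop :=
  (∀ v, ¬ T v v) ∧ (∀ x y, T x y → ¬ T y x) ∧ (underlying T).IsTree ∧
    ∃ r, (∀ u, ¬ T u r) ∧ ∀ v, v ≠ r → ∃! u, T u v

/-!
`γ_OL(D) = n` exactly when every vertex is forced, i.e. lies in every OLD set. For a reflexive
digraph without 2-cycles this means every vertex `v` is either a root, `N⁻(v) = {v}`, or has a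
parent `p` with `N⁻(p) = N⁻(v) \ {v}`. In-neighbourhoods shrink along parents, so the parent
relation is well-founded; its transitive closure is `D` without loops, every in-neighbourhood
contains exactly one root, and connectivity makes that root the same for all vertices. The
underlying graph of the parent relation is then a tree, since its edges correspond to the non-root
vertices. Conversely, in the closure of a rooted tree a root has in-neighbourhood `{r}` and a tree
parent is a parent in the above sense.
-/

open Relation

section Forcing

variable {V : Type*} {D : V → V → Prop}

lemma Set.eq_sdiff_singleton_of_symmDiff_eq_singleton {α : Type*} {A B : Set α} {a : α}
    (h : A ∆ B = {a}) (ha : a ∈ A) : B = A \ {a} := by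
  ext u
  have hu := Set.ext_iff.mp h u
  simp only [Set.mem_symmDiff, Set.mem_singleton_iff] at hu
  by_cases hua : u = a
  · subst hua
    simp only [Set.mem_sdiff, Set.mem_singleton_iff, not_true_eq_false, and_false, iff_false]
    tauto
  · simp only [Set.mem_sdiff, Set.mem_singleton_iff, hua, not_false_eq_true, and_true]
    tauto

lemma Locatable.symmDiff_nonempty (hloc : Locatable D) {x y : V} (hxy : x ≠ y) :
    (Nin D x ∆ Nin D y).Nonempty :=
  Set.nonempty_iff_ne_empty.mpr fun h => hxy (hloc.2 x y (symmDiff_eq_bot.mp h))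

lemma isOLD_univ (hrefl : ∀ v, D v v) (hloc : Locatable D) : IsOLD D Set.univ := by
  refine ⟨fun v => ⟨v, trivial, hrefl v⟩, fun x y hxy => ?_⟩
  obtain ⟨s, hs⟩ := hloc.symmDiff_nonempty hxy
  exact ⟨s, trivial, hs⟩

lemma isOLD_compl_singleton (hloc : Locatable D) {v : V} (hdom : ¬ DomForced D v)
    (hlf : ¬ LocForced D v) : IsOLD D {v}ᶜ := by
  have exists_mem_compl {s : Set V} (hs : s.Nonempty) (hsv : s ≠ {v}) :
      ∃ u ∈ s, u ∈ ({v}ᶜ : Set V) :=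
    Set.not_subset.mp (mt hs.subset_singleton_iff.mp hsv)
  refine ⟨fun w => ?_, fun x y hxy => ?_⟩
  · obtain ⟨u, hu, huv⟩ := exists_mem_compl (hloc.1 w) fun h => hdom ⟨w, h⟩
    exact ⟨u, huv, hu⟩
  · obtain ⟨s, hs, hsv⟩ :=
      exists_mem_compl (hloc.symmDiff_nonempty hxy) fun h => hlf ⟨x, y, hxy, h⟩
    exact ⟨s, hsv, hs⟩

lemma IsOLD.mem_of_forced {S : Set V} (hS : IsOLD D S) {v : V}
    (hv : DomForced D v ∨ LocForced D v) : v ∈ S := by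
  rcases hv with ⟨w, hw⟩ | ⟨x, y, hxy, hd⟩
  · obtain ⟨u, huS, hu⟩ := hS.1 w
    have hu' : u ∈ Nin D w := hu
    rw [hw, Set.mem_singleton_iff] at hu'
    exact hu' ▸ huS
  · obtain ⟨s, hsS, hs⟩ := hS.2 x y hxy
    rw [hd, Set.mem_singleton_iff] at hs
    exact hs ▸ hsS

lemma oldNum_eq_card_iff [Fintype V] (hrefl : ∀ v, D v v) (hloc : Locatable D) :
    oldNum D = Fintype.card V ↔ ∀ v, DomForced D v ∨ LocForced D v := by
  constructor
  · intro h v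
    by_contra hv
    rw [not_or] at hv
    have hle : oldNum D ≤ ({v}ᶜ : Set V).ncard :=
      Nat.sInf_le ⟨_, isOLD_compl_singleton hloc hv.1 hv.2, rfl⟩
    rw [Set.ncard_compl, Set.ncard_singleton, Nat.card_eq_fintype_card] at hle
    have := Fintype.card_pos_iff.mpr ⟨v⟩
    omega
  · intro hforced
    have hsizes : {k | ∃ S : Set V, IsOLD D S ∧ S.ncard = k} = {Fintype.card V} := by
      ext k
      simp only [Set.mem_ofPred_eq, Set.mem_singleton_iff]
      constructor
      · rintro ⟨S, hS, rfl⟩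
        rw [Set.eq_univ_of_forall fun v => hS.mem_of_forced (hforced v), Set.ncard_univ,
          Nat.card_eq_fintype_card]
      · rintro rfl
        exact ⟨Set.univ, isOLD_univ hrefl hloc, by rw [Set.ncard_univ, Nat.card_eq_fintype_card]⟩
    rw [oldNum, hsizes, csInf_singleton]

def IsParent (D : V → V → Prop) (p v : V) : Prop := Nin D p = Nin D v \ {v}

lemma IsParent.mem_nin (hrefl : ∀ v, D v v) {p v : V} (hp : IsParent D p v) :
    p ∈ Nin D v \ {v} := by
  rw [← hp]
  exact hrefl p

lemma IsParent.ne (hrefl : ∀ v, D v v) {p v : V} (hp : IsParent D p v) : p ≠ v :=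
  (hp.mem_nin hrefl).2

lemma IsParent.unique (hloc : Locatable D) {p q v : V} (hp : IsParent D p v)
    (hq : IsParent D q v) : p = q :=
  hloc.2 p q (hp.trans hq.symm)

lemma not_isParent_of_nin_eq_singleton (hloc : Locatable D) {p v : V} (hv : Nin D v = {v}) :
    ¬ IsParent D p v := by
  intro hp
  rw [IsParent, hv, sdiff_self] at hp
  exact (hloc.1 p).ne_empty hp

lemma domForced_or_locForced_iff (hrefl : ∀ v, D v v) (h2cyc : ∀ x y, x ≠ y → D x y → ¬ D y x)
    {v : V} : DomForced D v ∨ LocForced D v ↔ Nin D v = {v} ∨ ∃ p, IsParent D p v := by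
  constructor
  · rintro (⟨w, hw⟩ | ⟨x, y, hxy, hd⟩)
    · have hw' : w ∈ Nin D w := hrefl w
      rw [hw, Set.mem_singleton_iff] at hw'
      exact Or.inl (hw' ▸ hw)
    · right
      rcases eq_or_ne x v with rfl | hxv
      · exact ⟨y, Set.eq_sdiff_singleton_of_symmDiff_eq_singleton hd (hrefl x)⟩
      rcases eq_or_ne y v with rfl | hyv
      · rw [symmDiff_comm] at hd
        exact ⟨x, Set.eq_sdiff_singleton_of_symmDiff_eq_singleton hd (hrefl y)⟩
      -- neither x nor y lies in the symmetric difference, so they form a 2-cycle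
      have hx := Set.ext_iff.mp hd x
      have hy := Set.ext_iff.mp hd y
      simp only [Set.mem_symmDiff, Set.mem_singleton_iff, hxv, hyv, iff_false] at hx hy
      have hxx : x ∈ Nin D x := hrefl x
      have hyy : y ∈ Nin D y := hrefl y
      exact absurd (show y ∈ Nin D x by tauto) (h2cyc x y hxy (show x ∈ Nin D y by tauto))
  · rintro (hv | ⟨p, hp⟩)
    · exact Or.inl ⟨v, hv⟩
    · refine Or.inr ⟨v, p, (hp.ne hrefl).symm, ?_⟩
      rw [hp, symmDiff_of_ge Set.sdiff_subset, sdiff_sdiff_right_self]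
      exact Set.inter_singleton_of_mem (hrefl v)

end Forcing

section ParentStructure

variable {V : Type*} [Finite V] {D : V → V → Prop} (hrefl : ∀ v, D v v) (hloc : Locatable D)
  (hstruct : ∀ v, Nin D v = {v} ∨ ∃ p, IsParent D p v)
include hrefl

lemma wellFounded_isParent : WellFounded (IsParent D) :=
  Subrelation.wf (fun {p v} (hp : IsParent D p v) =>
      show (Nin D p).ncard < (Nin D v).ncard by
        rw [hp]
        exact Set.ncard_sdiff_singleton_lt_of_mem (hrefl v))
    (measure fun v => (Nin D v).ncard).wf

include hstruct

lemma exists_root_mem_nin (v : V) : ∃ r, Nin D r = {r} ∧ r ∈ Nin D v := by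
  induction v using (wellFounded_isParent hrefl).induction with
  | _ v ih =>
    rcases hstruct v with hroot | ⟨p, hp⟩
    · exact ⟨v, hroot, hrefl v⟩
    · obtain ⟨r, hr, hrp⟩ := ih p hp
      rw [hp] at hrp
      exact ⟨r, hr, hrp.1⟩

lemma transGen_isParent_iff {x v : V} : (x ≠ v ∧ D x v) ↔ TransGen (IsParent D) x v := by
  constructor
  · induction v using (wellFounded_isParent hrefl).induction generalizing x with
    | _ v ih =>
      rintro ⟨hxv, hx⟩
      rcases hstruct v with hroot | ⟨p, hp⟩
      · exact absurd ((Set.ext_iff.mp hroot x).mp hx) hxv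
      · have hxp : x ∈ Nin D p := hp ▸ ⟨hx, hxv⟩
        rcases eq_or_ne x p with rfl | hxp'
        · exact TransGen.single hp
        · exact (ih p hp ⟨hxp', hxp⟩).tail hp
  · intro h
    suffices x ∈ Nin D v \ {v} from ⟨this.2, this.1⟩
    induction h with
    | single hp => exact hp.mem_nin hrefl
    | tail _ hp ih =>
      rw [← hp]
      exact ih.1

lemma nin_subset_nin {x y : V} (hxy : D x y) : Nin D x ⊆ Nin D y := by
  intro u hu
  rcases eq_or_ne x y with rfl | hne
  · exact hu
  rcases eq_or_ne u x with rfl | hux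
  · exact hxy
  have hchain := ((transGen_isParent_iff hrefl hstruct).mp ⟨hux, hu⟩).trans
    ((transGen_isParent_iff hrefl hstruct).mp ⟨hne, hxy⟩)
  exact ((transGen_isParent_iff hrefl hstruct).mpr hchain).2

include hloc

lemma root_unique_of_mem_nin {r₁ r₂ v : V} (hr₁ : Nin D r₁ = {r₁}) (hr₂ : Nin D r₂ = {r₂})
    (h₁ : r₁ ∈ Nin D v) (h₂ : r₂ ∈ Nin D v) : r₁ = r₂ := by
  induction v using (wellFounded_isParent hrefl).induction with
  | _ v ih =>
    rcases hstruct v with hroot | ⟨p, hp⟩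
    · rw [hroot] at h₁ h₂
      exact h₁.trans h₂.symm
    · have mem_nin_parent {r : V} (hr : Nin D r = {r}) (h : r ∈ Nin D v) : r ∈ Nin D p := by
        rw [hp]
        refine ⟨h, fun hrv => not_isParent_of_nin_eq_singleton hloc ?_ hp⟩
        rwa [← Set.mem_singleton_iff.mp hrv]
      exact ih p hp (mem_nin_parent hr₁ h₁) (mem_nin_parent hr₂ h₂)

lemma root_mem_nin_of_adj {r x y : V} (hr : Nin D r = {r}) (hx : r ∈ Nin D x)
    (hxy : (underlying D).Adj x y) : r ∈ Nin D y := by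
  rcases hxy.2 with h | h
  · exact nin_subset_nin hrefl hstruct h hx
  · obtain ⟨r', hr', hr'y⟩ := exists_root_mem_nin hrefl hstruct y
    rwa [root_unique_of_mem_nin hrefl hloc hstruct hr hr' hx
      (nin_subset_nin hrefl hstruct h hr'y)]

lemma root_mem_nin (hconn : (underlying D).Connected) {r : V} (hr : Nin D r = {r}) (v : V) :
    r ∈ Nin D v := by
  induction (SimpleGraph.reachable_iff_reflTransGen r v).mp (hconn.preconnected r v) with
  | refl => exact hrefl r
  | tail _ hadj ih => exact root_mem_nin_of_adj hrefl hloc hstruct hr ih hadj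

end ParentStructure

lemma isTree_underlying {V : Type*} [Finite V] {T : V → V → Prop}
    (hasymm : ∀ x y, T x y → ¬ T y x) {r : V} (hr : ∀ u, ¬ T u r)
    (hpar : ∀ v, v ≠ r → ∃! u, T u v) (hreach : ∀ v, ReflTransGen T r v) :
    (underlying T).IsTree := by
  have hadj {x y : V} (h : T x y) : (underlying T).Adj x y :=
    ⟨fun hxy => hasymm x y h (hxy ▸ h), Or.inl h⟩
  choose par hpar' using fun v (hv : v ≠ r) => (hpar v hv).exists
  have hedges : ({r}ᶜ : Set V).ncard = (underlying T).edgeSet.ncard := by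
    refine Set.ncard_congr (fun v hv => s(par v hv, v)) (fun v hv => hadj (hpar' v hv)) ?_ ?_
    · intro a b ha hb h
      rcases Sym2.eq_iff.mp h with ⟨-, hab⟩ | ⟨hpa, hpb⟩
      · exact hab
      · have hba := hpar' a ha
        have hab := hpar' b hb
        rw [hpa] at hba
        rw [← hpb] at hab
        exact (hasymm _ _ hab hba).elim
    · refine Sym2.ind fun x y hxy => ?_
      rcases ((SimpleGraph.mem_edgeSet _).mp hxy).2 with h | h
      · have hy : y ≠ r := fun hyr => hr x (hyr ▸ h)
        exact ⟨y, hy, by rw [(hpar y hy).unique (hpar' y hy) h]⟩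
      · have hx : x ≠ r := fun hxr => hr y (hxr ▸ h)
        exact ⟨x, hx, by rw [(hpar x hx).unique (hpar' x hx) h, Sym2.eq_swap]⟩
  have hreach' (v : V) : (underlying T).Reachable r v :=
    (SimpleGraph.reachable_iff_reflTransGen r v).mpr
      (ReflTransGen.mono (fun _ _ => hadj) r v (hreach v))
  rw [SimpleGraph.isTree_iff_connected_and_card, SimpleGraph.connected_iff]
  refine ⟨⟨fun x y => (hreach' x).symm.trans (hreach' y), ⟨r⟩⟩, ?_⟩
  rw [Nat.card_coe_set_eq, ← hedges, Set.compl_eq_univ_sdiff,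
    Set.ncard_sdiff_singleton_add_one (Set.mem_univ r), Set.ncard_univ]

section RootedTree

variable {V : Type*} {D : V → V → Prop}

lemma exists_isRootedDirTree [Finite V] (hconn : (underlying D).Connected)
    (hrefl : ∀ v, D v v) (hloc : Locatable D)
    (hstruct : ∀ v, Nin D v = {v} ∨ ∃ p, IsParent D p v) :
    ∃ T : V → V → Prop, IsRootedDirTree T ∧ ∀ x y, (x ≠ y ∧ D x y) ↔ TransGen T x y := by
  obtain ⟨r, hr, -⟩ := exists_root_mem_nin hrefl hstruct hconn.nonempty.some
  have hwf := wellFounded_isParent hrefl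
  have hr_mem := root_mem_nin hrefl hloc hstruct hconn hr
  have hpar (v : V) (hv : v ≠ r) : ∃! u, IsParent D u v := by
    rcases hstruct v with hroot | ⟨p, hp⟩
    · have hrv := hr_mem v
      rw [hroot, Set.mem_singleton_iff] at hrv
      exact absurd hrv.symm hv
    · exact ⟨p, hp, fun q hq => hq.unique hloc hp⟩
  have hreach (v : V) : ReflTransGen (IsParent D) r v := by
    rcases eq_or_ne r v with rfl | hrv
    · exact ReflTransGen.refl
    · exact ((transGen_isParent_iff hrefl hstruct).mp ⟨hrv, hr_mem v⟩).to_reflTransGen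
  have hroot (u : V) : ¬ IsParent D u r := not_isParent_of_nin_eq_singleton hloc hr
  refine ⟨IsParent D, ⟨fun v hv => hv.ne hrefl rfl, hwf.asymmetric,
    isTree_underlying hwf.asymmetric hroot hpar hreach, r, hroot, hpar⟩,
    fun _ _ => transGen_isParent_iff hrefl hstruct⟩

lemma nin_eq_singleton_or_exists_isParent {T : V → V → Prop} (hrefl : ∀ v, D v v)
    (hT : ∀ u u' v, T u v → T u' v → u = u') (hD : ∀ x y, (x ≠ y ∧ D x y) ↔ TransGen T x y)
    (v : V) : Nin D v = {v} ∨ ∃ p, IsParent D p v := by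
  have hnin (x w : V) : x ∈ Nin D w ↔ ReflTransGen T x w := by
    rw [reflTransGen_iff_eq_or_transGen, ← hD]
    constructor
    · intro hx
      by_cases hxw : x = w
      exacts [Or.inl hxw.symm, Or.inr ⟨hxw, hx⟩]
    · rintro (rfl | h)
      exacts [hrefl _, h.2]
  by_cases hv : ∃ u, T u v
  · obtain ⟨u, hu⟩ := hv
    refine Or.inr ⟨u, Set.ext fun x => ?_⟩
    rw [Set.mem_sdiff, hnin, hnin, Set.mem_singleton_iff]
    constructor
    · intro hxu
      have hxv := TransGen.tail' hxu hu
      exact ⟨hxv.to_reflTransGen, ((hD x v).mpr hxv).1⟩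
    · rintro ⟨hxv, hne⟩
      have hxv' := (reflTransGen_iff_eq_or_transGen.mp hxv).resolve_left (Ne.symm hne)
      obtain ⟨c, hxc, hc⟩ := TransGen.tail'_iff.mp hxv'
      rwa [hT c u v hc hu] at hxc
  · refine Or.inl (Set.ext fun x => ?_)
    rw [hnin, Set.mem_singleton_iff, reflTransGen_iff_eq_or_transGen, TransGen.tail'_iff]
    exact ⟨fun h => h.elim Eq.symm fun ⟨c, _, hc⟩ => absurd ⟨c, hc⟩ hv, fun h => Or.inl h.symm⟩

end RootedTree

theorem stmt_11 {V : Type*} [Fintype V] (D : V → V → Prop)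
    (hconn : (underlying D).Connected) (hrefl : ∀ v, D v v)
    (h2cyc : ∀ x y, x ≠ y → D x y → ¬ D y x) (hloc : Locatable D) :
    oldNum D = Fintype.card V ↔
      ∃ T : V → V → Prop, IsRootedDirTree T ∧
        ∀ x y, (x ≠ y ∧ D x y) ↔ Relation.TransGen T x y := by
  rw [oldNum_eq_card_iff hrefl hloc]
  simp only [domForced_or_locForced_iff hrefl h2cyc]
  refine ⟨exists_isRootedDirTree hconn hrefl hloc, ?_⟩
  rintro ⟨T, ⟨-, -, -, r, hr, hpar⟩, hD⟩
  refine nin_eq_singleton_or_exists_isParent hrefl (fun u u' v hu hu' => ?_) hD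
  have hv : v ≠ r := fun hvr => hr u (hvr ▸ hu)
  exact (hpar v hv).unique hu hu'
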